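/- arXiv:1905.01414 — 3 statements merged into one kernel-verified Lean document; each statement's English description precedes it below -/
import Mathlib

section
/- For every integer m ≥ 1, the set {α^{m−a} γ^a : 1 ≤ a ≤ m, a odd} is a ℂ-basis of (Q_m^{sgn})^{U_n}, the space of U_n-invariant polynomials f in Q_m satisfying τ·f = −f for the column-swap τ = (1 2); moreover each α^{m−a} γ^a is a weight vector for the diagonal torus: for t = diag(t₁,…,tₙ), t·(α^{m−a} γ^a) = t₁^{2m−a} t₂^{a} · α^{m−a} γ^a. (These are precisely the GL_n(ℂ)-highest weight vectors occurring in Λ²(S^m(ℂⁿ)) ≅ Q_m^{sgn}, giving the decomposition into irreducibles ρ_n^{(2m−a,a)} with a odd.) -/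
open MvPolynomial

noncomputable section

/-- The polynomial ring `𝒫 = ℂ[x_{ij} : 1 ≤ i ≤ n, 1 ≤ j ≤ 2]` in the entries of an
`n × 2` matrix of indeterminates. -/
abbrev P (n : ℕ) : Type := MvPolynomial (Fin n × Fin 2) ℂ

/-- The action of a matrix `g` on `𝒫`, given by `(g · f)(X) = f(gᵀ X)`;
on variables it sends `x_{ij} ↦ ∑ s g_{si} x_{sj}`. -/
def matAct (n : ℕ) (g : Matrix (Fin n) (Fin n) ℂ) : P n →ₐ[ℂ] P n :=
  aeval fun p : Fin n × Fin 2 => ∑ s : Fin n, C (g s p.1) * X (s, p.2)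

/-- The action of `σ ∈ S₂` permuting columns: `x_{ij} ↦ x_{iσ(j)}`. -/
def permAct (n : ℕ) (σ : Equiv.Perm (Fin 2)) : P n →ₐ[ℂ] P n :=
  aeval fun p : Fin n × Fin 2 => X (p.1, σ p.2)

/-- `g` is upper triangular with all diagonal entries equal to `1`, i.e. `g ∈ U_n`. -/
def IsUpperUni (n : ℕ) (g : Matrix (Fin n) (Fin n) ℂ) : Prop :=
  (∀ i, g i i = 1) ∧ ∀ i j, j < i → g i j = 0

/-- `f` is `U_n`-invariant. -/
def UInv (n : ℕ) (f : P n) : Prop :=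
  ∀ g : Matrix (Fin n) (Fin n) ℂ, IsUpperUni n g → matAct n g f = f

/-- `f ∈ Q_m` : each monomial of `f` has total degree `m` in the column-`j` variables,
for each `j`. -/
def InQm (n m : ℕ) (f : P n) : Prop :=
  ∀ d ∈ f.support, ∀ j : Fin 2, (∑ i : Fin n, d (i, j)) = m

/-- `f ∈ Q = ⊕ₘ Q_m` : each monomial of `f` has equal total degree in the two columns. -/
def InQ (n : ℕ) (f : P n) : Prop :=
  ∀ d ∈ f.support, ∀ j : Fin 2, (∑ i : Fin n, d (i, j)) = ∑ i : Fin n, d (i, (0 : Fin 2))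

/-- The variable `x_{(i+1)(j+1)}`, `i j : Fin 2` (0-indexed rows and columns). -/
def Xe (n : ℕ) (hn : 2 ≤ n) (i j : Fin 2) : P n := X (Fin.castLE hn i, j)

/-- `α = x₁₁ x₁₂`. -/
def alpha (n : ℕ) (hn : 2 ≤ n) : P n := Xe n hn 0 0 * Xe n hn 0 1

/-- `γ = x₁₁ x₂₂ − x₂₁ x₁₂`. -/
def gamma (n : ℕ) (hn : 2 ≤ n) : P n := Xe n hn 0 0 * Xe n hn 1 1 - Xe n hn 1 0 * Xe n hn 0 1

lemma eval_aeval' {σ τ : Type*} (φ : σ → MvPolynomial τ ℂ) (z : τ → ℂ)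
    (f : MvPolynomial σ ℂ) :
    eval z (aeval φ f) = eval (fun p => eval z (φ p)) f := by
  induction f using MvPolynomial.induction_on with
  | C a => simp
  | add p q hp hq => simp only [map_add, hp, hq]
  | mul_X p i hp => simp only [map_mul, aeval_X, eval_X, hp]

lemma sum_two {n : ℕ} {M : Type*} [AddCommMonoid M] (F : Fin n → M) (a b : Fin n)
    (hab : a ≠ b) (h : ∀ s, s ≠ a → s ≠ b → F s = 0) :
    ∑ s, F s = F a + F b := by
  rw [show (∑ s, F s) = ∑ s ∈ ({a, b} : Finset (Fin n)), F s from
    (Finset.sum_subset (Finset.subset_univ _) (by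
      intro s _ hs
      simp only [Finset.mem_insert, Finset.mem_singleton] at hs
      push_neg at hs
      exact h s hs.1 hs.2)).symm]
  exact Finset.sum_pair hab

-- ### auxiliary
namespace Aux

variable (n : ℕ) (hn : 2 ≤ n)

def r0 : Fin n := Fin.castLE hn 0
def r1 : Fin n := Fin.castLE hn 1

lemma r0_ne_r1 : r0 n hn ≠ r1 n hn := by
  simp [r0, r1, Fin.ext_iff]

/-- substitution x00 ↦ u, x01 ↦ v, x11 ↦ w, rest ↦ 0 -/
def psi : P n →ₐ[ℂ] MvPolynomial (Fin 3) ℂ :=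
  aeval fun p : Fin n × Fin 2 =>
    if p = (r0 n hn, 0) then X 0 else if p = (r0 n hn, 1) then X 1
      else if p = (r1 n hn, 1) then X 2 else 0

lemma psi_alpha : psi n hn (alpha n hn) = X 0 * X 1 := by
  simp [psi, alpha, Xe, r0, r1]

lemma psi_gamma : psi n hn (gamma n hn) = X 0 * X 2 := by
  have h := r0_ne_r1 n hn
  simp [psi, gamma, Xe, r0, r1, Prod.ext_iff]

def wt (m r : ℕ) : Fin 3 →₀ ℕ := Finsupp.single 0 m + Finsupp.single 1 (m - r) + Finsupp.single 2 r

lemma psi_v (m r : ℕ) (hr : r ≤ m) :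
    psi n hn (alpha n hn ^ (m - r) * gamma n hn ^ r) = monomial (wt m r) 1 := by
  rw [map_mul, map_pow, map_pow, psi_alpha, psi_gamma]
  have h1 : monomial (wt m r) (1:ℂ) = X 0 ^ m * X 1 ^ (m-r) * X 2 ^ r := by
    rw [X_pow_eq_monomial, X_pow_eq_monomial, X_pow_eq_monomial, monomial_mul, monomial_mul, wt]
    simp
  have h2 : X (0:Fin 3) ^ m = (X 0 ^ (m-r) * X 0 ^ r : MvPolynomial (Fin 3) ℂ) := by
    rw [← pow_add, Nat.sub_add_cancel hr]
  rw [h1, h2, mul_pow, mul_pow]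
  ring

lemma wt_inj (m : ℕ) : Function.Injective fun r : {a : ℕ // 1 ≤ a ∧ a ≤ m ∧ Odd a} => wt m r := by
  intro a b h
  have := congrArg (fun d => d 2) h
  simp only [wt, Finsupp.add_apply, Finsupp.single_apply] at this
  ext
  simpa using this

lemma lin_indep (m : ℕ) :
    LinearIndependent ℂ (fun a : {a : ℕ // 1 ≤ a ∧ a ≤ m ∧ Odd a} =>
      alpha n hn ^ (m - (a : ℕ)) * gamma n hn ^ (a : ℕ)) := by
  apply LinearIndependent.of_comp (psi n hn).toLinearMap
  have : ((psi n hn).toLinearMap ∘ fun a : {a : ℕ // 1 ≤ a ∧ a ≤ m ∧ Odd a} =>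
      alpha n hn ^ (m - (a : ℕ)) * gamma n hn ^ (a : ℕ)) =
      fun a : {a : ℕ // 1 ≤ a ∧ a ≤ m ∧ Odd a} => (basisMonomials (Fin 3) ℂ) (wt m a) := by
    funext a
    simp only [Function.comp, AlgHom.toLinearMap_apply, coe_basisMonomials]
    exact psi_v n hn m a a.2.2.1
  rw [this]
  exact (basisMonomials (Fin 3) ℂ).linearIndependent.comp _ (wt_inj m)


def yPt (x : Fin n × Fin 2 → ℂ) : Fin n × Fin 2 → ℂ := fun p =>
  if p = (r0 n hn, 0) then x (r0 n hn, 0)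
  else if p = (r0 n hn, 1) then x (r0 n hn, 1)
  else if p = (r1 n hn, 1) then
    (x (r0 n hn, 0) * x (r1 n hn, 1) - x (r1 n hn, 0) * x (r0 n hn, 1)) / x (r0 n hn, 0)
  else 0

lemma exists_good (x : Fin n × Fin 2 → ℂ) (hu : x (r0 n hn, 0) ≠ 0)
    (hG : x (r0 n hn, 0) * x (r1 n hn, 1) - x (r1 n hn, 0) * x (r0 n hn, 1) ≠ 0) :
    ∃ g : Matrix (Fin n) (Fin n) ℂ, IsUpperUni n g ∧
      (fun p : Fin n × Fin 2 => ∑ s : Fin n, g s p.1 * x (s, p.2)) = yPt n hn x := by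
  have hr0 : (r0 n hn).val = 0 := rfl
  have hr1 : (r1 n hn).val = 1 := rfl
  have hne01 := r0_ne_r1 n hn
  have hne10 : r1 n hn ≠ r0 n hn := (r0_ne_r1 n hn).symm
  set u := x (r0 n hn, 0) with hudef
  set v := x (r0 n hn, 1) with hvdef
  set a := x (r1 n hn, 0) with hadef
  set b := x (r1 n hn, 1) with hbdef
  set G := u * b - a * v with hGdef
  set N : Matrix (Fin n) (Fin n) ℂ := fun i j =>
    if i = r1 n hn ∧ j = r0 n hn then -(a / u)
    else if 2 ≤ i.val ∧ j = r0 n hn then (a * x (i, 1) - b * x (i, 0)) / G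
    else if 2 ≤ i.val ∧ j = r1 n hn then (v * x (i, 0) - u * x (i, 1)) / G
    else 0 with hN
  refine ⟨fun s t => (if t = s then (1:ℂ) else 0) + N t s, ⟨?_, ?_⟩, ?_⟩
  · intro i
    have h1 : N i i = 0 := by
      simp only [hN]
      rw [if_neg, if_neg, if_neg]
      · rintro ⟨h2, h3⟩; rw [h3] at h2; exact absurd h2 (by rw [hr1]; omega)
      · rintro ⟨h2, h3⟩; rw [h3] at h2; exact absurd h2 (by rw [hr0]; omega)
      · rintro ⟨h2, h3⟩; exact hne01 (h3.symm.trans h2)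
    simp [h1]
  · intro i j hji
    have hne : j ≠ i := Fin.ne_of_lt hji
    have h1 : N j i = 0 := by
      simp only [hN]
      rw [if_neg, if_neg, if_neg]
      · rintro ⟨h2, h3⟩; rw [h3, Fin.lt_iff_val_lt_val, hr1] at hji; omega
      · rintro ⟨h2, h3⟩; rw [h3, Fin.lt_iff_val_lt_val, hr0] at hji; omega
      · rintro ⟨h2, h3⟩; rw [h2, h3, Fin.lt_iff_val_lt_val, hr0, hr1] at hji; omega
    simp [hne, h1]
  · funext p
    obtain ⟨i, j⟩ := p
    have hxsum : ∀ jj : Fin 2, (∑ s : Fin n, ((if i = s then (1:ℂ) else 0) + N i s) * x (s, jj))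
        = x (i, jj) + (N i (r0 n hn) * x (r0 n hn, jj) + N i (r1 n hn) * x (r1 n hn, jj)) := by
      intro jj
      have e1 : ∀ s ∈ Finset.univ, ((if i = s then (1:ℂ) else 0) + N i s) * x (s, jj)
          = (if i = s then x (s, jj) else 0) + N i s * x (s, jj) := by
        intro s _; split_ifs <;> ring
      rw [Finset.sum_congr rfl e1, Finset.sum_add_distrib]
      congr 1
      · simp
      · exact sum_two _ (r0 n hn) (r1 n hn) hne01 (fun s hs0 hs1 => by
          simp [hN, hs0, hs1])
    have tri : i = r0 n hn ∨ i = r1 n hn ∨ 2 ≤ i.val := by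
      rcases Nat.lt_or_ge i.val 2 with h | h
      · rcases (by omega : i.val = 0 ∨ i.val = 1) with h0 | h0
        · exact Or.inl (Fin.ext (by rw [h0, hr0]))
        · exact Or.inr (Or.inl (Fin.ext (by rw [h0, hr1])))
      · exact Or.inr (Or.inr h)
    show (∑ s : Fin n, ((if i = s then (1:ℂ) else 0) + N i s) * x (s, j)) = yPt n hn x (i, j)
    rw [hxsum j]
    have hj : j = 0 ∨ j = 1 := by fin_cases j <;> simp
    rcases tri with hi | hi | hi
    · have n00 : N i (r0 n hn) = 0 := by simp [hN, hi, hne01, hr0]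
      have n01 : N i (r1 n hn) = 0 := by simp [hN, hi, hne01, hr0]
      subst hi
      rw [n00, n01]
      rcases hj with rfl | rfl
      · simp [yPt]
      · simp [yPt, Prod.ext_iff]
    · have n10 : N i (r0 n hn) = -(a / u) := by simp [hN, hi]
      have n11 : N i (r1 n hn) = 0 := by simp [hN, hi, hne10, hr1]
      subst hi
      rw [n10, n11]
      rcases hj with rfl | rfl
      · have : yPt n hn x (r1 n hn, 0) = 0 := by
          simp [yPt, Prod.ext_iff, hne10]
        rw [this]
        simp only [← hadef, ← hudef]
        field_simp
        ring
      · have : yPt n hn x (r1 n hn, 1) = G / u := by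
          simp [yPt, Prod.ext_iff, hne10]
          rfl
        rw [this]
        simp only [← hbdef, ← hvdef]
        field_simp
        rw [hGdef]; ring
    · have hI0 : i ≠ r0 n hn := by intro h; rw [h, hr0] at hi; omega
      have hI1 : i ≠ r1 n hn := by intro h; rw [h, hr1] at hi; omega
      have nA : N i (r0 n hn) = (a * x (i, 1) - b * x (i, 0)) / G := by
        simp [hN, hI1, hi]
      have nB : N i (r1 n hn) = (v * x (i, 0) - u * x (i, 1)) / G := by
        simp [hN, hI1, hi, hne10]
      rw [nA, nB]
      have : yPt n hn x (i, j) = 0 := by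
        simp [yPt, Prod.ext_iff, hI0, hI1]
      rw [this]
      rcases hj with rfl | rfl
      · simp only [← hudef, ← hadef, Fin.isValue]
        field_simp
        rw [hGdef]; ring
      · simp only [← hvdef, ← hbdef, Fin.isValue]
        field_simp
        rw [hGdef]; ring

lemma wt_apply2 (m r : ℕ) : wt m r 2 = r := by simp [wt]

lemma wt_injective (m : ℕ) : Function.Injective (wt m) := fun a b h => by
  have := congrArg (fun d => d 2) h
  simpa [wt_apply2] using this

lemma monomial_wt (m r : ℕ) (c : ℂ) :
    (monomial (wt m r) c : MvPolynomial (Fin 3) ℂ) = C c * (X 0 ^ m * X 1 ^ (m - r) * X 2 ^ r) := by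
  rw [X_pow_eq_monomial, X_pow_eq_monomial, X_pow_eq_monomial, monomial_mul, monomial_mul,
    C_mul_monomial, wt]
  simp

lemma psi_X (p : Fin n × Fin 2) :
    psi n hn (X p) = if p = (r0 n hn, 0) then X 0 else if p = (r0 n hn, 1) then X 1
      else if p = (r1 n hn, 1) then X 2 else 0 := aeval_X _ _

lemma psi_monomial (m : ℕ) (d : (Fin n × Fin 2) →₀ ℕ) (c : ℂ)
    (hcol : ∀ j : Fin 2, (∑ i : Fin n, d (i, j)) = m) :
    psi n hn (monomial d c) = 0 ∨
      ∃ r ≤ m, psi n hn (monomial d c) = monomial (wt m r) c := by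
  classical
  have hpsimon : psi n hn (monomial d c)
      = C c * ∏ p ∈ d.support, (psi n hn (X p)) ^ d p := by
    rw [monomial_eq, map_mul, map_finsuppProd]
    simp only [map_pow]
    rw [Finsupp.prod]
    congr 1
    simp [psi]
  by_cases hS : ∀ p ∈ d.support, p = (r0 n hn, 0) ∨ p = (r0 n hn, 1) ∨ p = (r1 n hn, 1)
  · right
    have h2 : d (r1 n hn, 1) ≤ m ∧ d (r0 n hn, 1) = m - d (r1 n hn, 1) := by
      have hsum : (∑ i : Fin n, d (i, 1)) = d (r0 n hn, 1) + d (r1 n hn, 1) := by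
        apply sum_two _ _ _ (r0_ne_r1 n hn)
        intro s hs0 hs1
        by_contra hd
        rcases hS (s, 1) (Finsupp.mem_support_iff.mpr hd) with h | h | h
        · exact absurd (congrArg Prod.snd h) (by simp)
        · exact hs0 (congrArg Prod.fst h)
        · exact hs1 (congrArg Prod.fst h)
      rw [hcol 1] at hsum
      omega
    refine ⟨d (r1 n hn, 1), h2.1, ?_⟩
    have h0 : d (r0 n hn, 0) = m := by
      have hsum : (∑ i : Fin n, d (i, 0)) = d (r0 n hn, 0) := by
        apply Finset.sum_eq_single
        · intro s _ hs0
          by_contra hd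
          rcases hS (s, 0) (Finsupp.mem_support_iff.mpr hd) with h | h | h
          · exact hs0 (congrArg Prod.fst h)
          · exact absurd (congrArg Prod.snd h) (by simp)
          · exact absurd (congrArg Prod.snd h) (by simp)
        · intro h; simp at h
      rw [← hcol 0, hsum]
    have hsub : d.support ⊆ {(r0 n hn, 0), (r0 n hn, 1), (r1 n hn, 1)} := by
      intro p hp
      rcases hS p hp with h | h | h <;> simp [h]
    have hprod : (∏ p ∈ d.support, (psi n hn (X p)) ^ d p)
        = ∏ p ∈ ({(r0 n hn, 0), (r0 n hn, 1), (r1 n hn, 1)} : Finset (Fin n × Fin 2)),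
            (psi n hn (X p)) ^ d p := by
      apply Finset.prod_subset hsub
      intro p _ hp
      rw [Finsupp.notMem_support_iff.mp hp, pow_zero]
    have hd01 : ((r0 n hn, 0) : Fin n × Fin 2) ≠ (r0 n hn, 1) := by simp
    have hd02 : ((r0 n hn, 0) : Fin n × Fin 2) ≠ (r1 n hn, 1) := by simp
    have hd12 : ((r0 n hn, 1) : Fin n × Fin 2) ≠ (r1 n hn, 1) := by
      simp [Prod.ext_iff, r0_ne_r1 n hn]
    have e00 : psi n hn (X (r0 n hn, 0)) = X 0 := by rw [psi_X, if_pos rfl]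
    have e01 : psi n hn (X ((r0 n hn, 1) : Fin n × Fin 2)) = X 1 := by
      rw [psi_X, if_neg hd01.symm, if_pos rfl]
    have e11 : psi n hn (X ((r1 n hn, 1) : Fin n × Fin 2)) = X 2 := by
      rw [psi_X, if_neg (by simp [Prod.ext_iff, (r0_ne_r1 n hn).symm]),
        if_neg (by simp [Prod.ext_iff, (r0_ne_r1 n hn).symm]), if_pos rfl]
    rw [hpsimon, hprod, Finset.prod_insert (by simp [hd01, hd02]),
      Finset.prod_insert (by simp [hd12]), Finset.prod_singleton, e00, e01, e11,
      monomial_wt, h0, h2.2]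
    ring
  · left
    push_neg at hS
    obtain ⟨p, hp, h1, h2, h3⟩ := hS
    rw [hpsimon, Finset.prod_eq_zero hp, mul_zero]
    rw [psi_X, if_neg h1, if_neg h2, if_neg h3]
    exact zero_pow (Finsupp.mem_support_iff.mp hp)

lemma psi_shape (m : ℕ) (f : P n) (hf : InQm n m f) :
    psi n hn f = ∑ r ∈ Finset.range (m + 1),
      monomial (wt m r) (coeff (wt m r) (psi n hn f)) := by
  classical
  have hsupp : ∀ e ∈ (psi n hn f).support, ∃ r ≤ m, e = wt m r := by
    intro e he
    have : psi n hn f = ∑ d ∈ f.support, psi n hn (monomial d (coeff d f)) := by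
      conv_lhs => rw [f.as_sum]
      rw [map_sum]
    rw [this] at he
    obtain ⟨d, hd, he2⟩ := Finset.mem_biUnion.mp (support_sum he)
    rcases psi_monomial n hn m d (coeff d f) (hf d hd) with h | ⟨r, hr, h⟩
    · rw [h] at he2; simp at he2
    · rw [h] at he2
      have := support_monomial_subset he2
      simp only [Finset.mem_singleton] at this
      exact ⟨r, hr, this⟩
  apply MvPolynomial.ext
  intro e
  rw [coeff_sum]
  by_cases he : ∃ r ≤ m, e = wt m r
  · obtain ⟨r, hr, rfl⟩ := he
    rw [Finset.sum_eq_single r]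
    · rw [coeff_monomial, if_pos rfl]
    · intro r' _ hr'
      rw [coeff_monomial, if_neg (fun h => hr' (wt_injective m h))]
    · intro h; exact absurd (Finset.mem_range.mpr (by omega)) h
  · rw [Finset.sum_eq_zero, eq_comm]
    · rw [eq_comm, ← MvPolynomial.notMem_support_iff]
      intro hmem
      obtain ⟨r, hr, he2⟩ := hsupp e hmem
      exact he ⟨r, hr, he2⟩
    · intro r hrr
      rw [coeff_monomial, if_neg]
      intro h
      exact he ⟨r, by have := Finset.mem_range.mp hrr; omega, h.symm⟩

lemma eval_matAct (g : Matrix (Fin n) (Fin n) ℂ) (x : Fin n × Fin 2 → ℂ) (f : P n) :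
    eval x (matAct n g f) = eval (fun p => ∑ s : Fin n, g s p.1 * x (s, p.2)) f := by
  rw [matAct, eval_aeval']
  have : (fun p : Fin n × Fin 2 => eval x (∑ s : Fin n, C (g s p.1) * X (s, p.2)))
      = fun p : Fin n × Fin 2 => ∑ s : Fin n, g s p.1 * x (s, p.2) := by
    funext p; simp
  rw [this]

lemma eval_psi (z : Fin 3 → ℂ) (f : P n) :
    eval z (psi n hn f) = eval (fun p => if p = (r0 n hn, 0) then z 0
      else if p = (r0 n hn, 1) then z 1 else if p = (r1 n hn, 1) then z 2 else 0) f := by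
  rw [psi, eval_aeval']
  have : (fun p : Fin n × Fin 2 => eval z (if p = (r0 n hn, 0) then X 0
      else if p = (r0 n hn, 1) then X 1 else if p = (r1 n hn, 1) then X 2 else 0))
      = fun p : Fin n × Fin 2 => if p = (r0 n hn, 0) then z 0
        else if p = (r0 n hn, 1) then z 1 else if p = (r1 n hn, 1) then z 2 else 0 := by
    funext p; split_ifs <;> simp
  rw [this]

lemma eval_alpha (x : Fin n × Fin 2 → ℂ) :
    eval x (alpha n hn) = x (r0 n hn, 0) * x (r0 n hn, 1) := by
  simp [alpha, Xe, r0, r1]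

lemma eval_gamma (x : Fin n × Fin 2 → ℂ) :
    eval x (gamma n hn) = x (r0 n hn, 0) * x (r1 n hn, 1) - x (r1 n hn, 0) * x (r0 n hn, 1) := by
  simp [gamma, Xe, r0, r1]

lemma pointwise (m : ℕ) (f : P n) (hf : InQm n m f) (hU : UInv n f)
    (x : Fin n × Fin 2 → ℂ) (hu : x (r0 n hn, 0) ≠ 0)
    (hG : x (r0 n hn, 0) * x (r1 n hn, 1) - x (r1 n hn, 0) * x (r0 n hn, 1) ≠ 0) :
    eval x f = ∑ r ∈ Finset.range (m + 1),
      coeff (wt m r) (psi n hn f) *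
        (x (r0 n hn, 0) * x (r0 n hn, 1)) ^ (m - r) *
        (x (r0 n hn, 0) * x (r1 n hn, 1) - x (r1 n hn, 0) * x (r0 n hn, 1)) ^ r := by
  obtain ⟨g, hg, hgx⟩ := exists_good n hn x hu hG
  have h1 : eval x f = eval (yPt n hn x) f := by
    conv_lhs => rw [← hU g hg]
    rw [eval_matAct, hgx]
  set z : Fin 3 → ℂ := ![x (r0 n hn, 0), x (r0 n hn, 1),
    (x (r0 n hn, 0) * x (r1 n hn, 1) - x (r1 n hn, 0) * x (r0 n hn, 1)) / x (r0 n hn, 0)]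
    with hz
  have h2 : eval (yPt n hn x) f = eval z (psi n hn f) := by
    rw [eval_psi]
    have : yPt n hn x = fun p : Fin n × Fin 2 => if p = (r0 n hn, 0) then z 0
        else if p = (r0 n hn, 1) then z 1 else if p = (r1 n hn, 1) then z 2 else 0 := by
      funext p
      simp only [yPt, hz]
      split_ifs <;> simp
    rw [this]
  rw [h1, h2]
  conv_lhs => rw [psi_shape n hn m f hf]
  rw [map_sum]
  apply Finset.sum_congr rfl
  intro r hr
  have hr' : r ≤ m := by have := Finset.mem_range.mp hr; omega
  rw [monomial_wt, map_mul, map_mul, map_mul, eval_C, map_pow, map_pow, map_pow,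
    eval_X, eval_X, eval_X]
  have hz0 : z 0 = x (r0 n hn, 0) := rfl
  have hz1 : z 1 = x (r0 n hn, 1) := rfl
  have hz2 : z 2 = (x (r0 n hn, 0) * x (r1 n hn, 1) - x (r1 n hn, 0) * x (r0 n hn, 1))
      / x (r0 n hn, 0) := rfl
  rw [hz0, hz1, hz2]
  have key : x (r0 n hn, 0) ^ m * x (r0 n hn, 1) ^ (m - r) *
      ((x (r0 n hn, 0) * x (r1 n hn, 1) - x (r1 n hn, 0) * x (r0 n hn, 1))
        / x (r0 n hn, 0)) ^ r
      = (x (r0 n hn, 0) * x (r0 n hn, 1)) ^ (m - r) *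
        (x (r0 n hn, 0) * x (r1 n hn, 1) - x (r1 n hn, 0) * x (r0 n hn, 1)) ^ r := by
    rw [div_pow, show x (r0 n hn, 0) ^ m
        = x (r0 n hn, 0) ^ (m - r) * x (r0 n hn, 0) ^ r from by
      rw [← pow_add, Nat.sub_add_cancel hr'], mul_pow]
    field_simp
  linear_combination coeff (wt m r) (psi n hn f) * key

lemma gamma_ne_zero : gamma n hn ≠ 0 := by
  intro h
  have h3 := congrArg (eval (fun p : Fin n × Fin 2 =>
    if p = (r0 n hn, 0) ∨ p = (r1 n hn, 1) then (1:ℂ) else 0)) h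
  rw [eval_gamma, map_zero] at h3
  simp [Prod.ext_iff, r0_ne_r1 n hn, (r0_ne_r1 n hn).symm] at h3

lemma struct (m : ℕ) (f : P n) (hf : InQm n m f) (hU : UInv n f) :
    f = ∑ r ∈ Finset.range (m + 1),
      C (coeff (wt m r) (psi n hn f)) * (alpha n hn ^ (m - r) * gamma n hn ^ r) := by
  have key : X ((r0 n hn, 0) : Fin n × Fin 2) * (gamma n hn *
      (f - ∑ r ∈ Finset.range (m + 1),
        C (coeff (wt m r) (psi n hn f)) * (alpha n hn ^ (m - r) * gamma n hn ^ r))) = 0 := by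
    apply MvPolynomial.funext
    intro x
    rw [map_zero, map_mul, map_mul, eval_X, eval_gamma, map_sub]
    by_cases hu : x (r0 n hn, 0) = 0
    · rw [hu]; ring
    by_cases hG : x (r0 n hn, 0) * x (r1 n hn, 1) - x (r1 n hn, 0) * x (r0 n hn, 1) = 0
    · rw [hG]; ring
    · have hp := pointwise n hn m f hf hU x hu hG
      have hq : eval x (∑ r ∈ Finset.range (m + 1),
          C (coeff (wt m r) (psi n hn f)) * (alpha n hn ^ (m - r) * gamma n hn ^ r))
          = ∑ r ∈ Finset.range (m + 1),
            coeff (wt m r) (psi n hn f) *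
              (x (r0 n hn, 0) * x (r0 n hn, 1)) ^ (m - r) *
              (x (r0 n hn, 0) * x (r1 n hn, 1) - x (r1 n hn, 0) * x (r0 n hn, 1)) ^ r := by
        rw [map_sum]
        apply Finset.sum_congr rfl
        intro r _
        rw [map_mul, eval_C, map_mul, map_pow, map_pow, eval_alpha, eval_gamma]
        ring
      rw [hp, hq, sub_self, mul_zero, mul_zero]
  have h4 : f - ∑ r ∈ Finset.range (m + 1),
      C (coeff (wt m r) (psi n hn f)) * (alpha n hn ^ (m - r) * gamma n hn ^ r) = 0 := by
    rcases mul_eq_zero.mp key with h | h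
    · exact absurd h (MvPolynomial.X_ne_zero _)
    rcases mul_eq_zero.mp h with h | h
    · exact absurd h (gamma_ne_zero n hn)
    · exact h
  exact sub_eq_zero.mp h4

lemma alpha_eq : alpha n hn = X (r0 n hn, 0) * X (r0 n hn, 1) := rfl

lemma gamma_eq : gamma n hn
    = X (r0 n hn, 0) * X (r1 n hn, 1) - X (r1 n hn, 0) * X (r0 n hn, 1) := rfl

lemma sum_single_col (q : Fin n) (j j' : Fin 2) (k : ℕ) :
    (∑ i : Fin n, (Finsupp.single ((q, j') : Fin n × Fin 2) k) (i, j))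
      = if j = j' then k else 0 := by
  classical
  by_cases hj : j = j'
  · subst hj
    simp [Finsupp.single_apply, Prod.ext_iff]
  · rw [if_neg hj, Finset.sum_eq_zero]
    intro i _
    rw [Finsupp.single_apply, if_neg]
    intro h
    exact hj (congrArg Prod.snd h).symm

lemma InQm_mul {p q : ℕ} {f g : P n} (hf : InQm n p f) (hg : InQm n q g) :
    InQm n (p + q) (f * g) := by
  classical
  intro d hd j
  obtain ⟨a, ha, b, hb, rfl⟩ := Finset.mem_add.mp (MvPolynomial.support_mul f g hd)
  simp only [Finsupp.add_apply]
  rw [Finset.sum_add_distrib, hf a ha j, hg b hb j]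

lemma InQm_one : InQm n 0 (1 : P n) := by
  intro d hd j
  have h1 : (1 : P n) = monomial 0 1 := by simp
  rw [h1] at hd
  have : d = 0 := by simpa using support_monomial_subset hd
  simp [this]

lemma InQm_pow {p : ℕ} {f : P n} (hf : InQm n p f) (k : ℕ) : InQm n (k * p) (f ^ k) := by
  induction k with
  | zero => simpa using InQm_one n
  | succ k ih =>
      have h2 := InQm_mul n ih hf
      rw [show (k + 1) * p = k * p + p from by ring, pow_succ]
      exact h2

lemma InQm_alpha : InQm n 1 (alpha n hn) := by
  intro d hd j
  have hmon : alpha n hn = monomial (Finsupp.single ((r0 n hn, 0) : Fin n × Fin 2) 1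
      + Finsupp.single ((r0 n hn, 1) : Fin n × Fin 2) 1) 1 := by
    rw [alpha_eq, X, X, monomial_mul, one_mul]
  rw [hmon] at hd
  have hd' : d = Finsupp.single ((r0 n hn, 0) : Fin n × Fin 2) 1
      + Finsupp.single ((r0 n hn, 1) : Fin n × Fin 2) 1 := by
    have := support_monomial_subset hd
    simpa using this
  subst hd'
  simp only [Finsupp.add_apply]
  rw [Finset.sum_add_distrib, sum_single_col, sum_single_col]
  fin_cases j <;> simp

lemma InQm_gamma : InQm n 1 (gamma n hn) := by
  intro d hd j
  have hmon1 : (X ((r0 n hn, 0) : Fin n × Fin 2) : P n) * X ((r1 n hn, 1) : Fin n × Fin 2)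
      = monomial (Finsupp.single ((r0 n hn, 0) : Fin n × Fin 2) 1
        + Finsupp.single ((r1 n hn, 1) : Fin n × Fin 2) 1) 1 := by
    rw [X, X, monomial_mul, one_mul]
  have hmon2 : (X ((r1 n hn, 0) : Fin n × Fin 2) : P n) * X ((r0 n hn, 1) : Fin n × Fin 2)
      = monomial (Finsupp.single ((r1 n hn, 0) : Fin n × Fin 2) 1
        + Finsupp.single ((r0 n hn, 1) : Fin n × Fin 2) 1) 1 := by
    rw [X, X, monomial_mul, one_mul]
  rw [gamma_eq, hmon1, hmon2] at hd
  classical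
  have := MvPolynomial.support_sub _ _ _ hd
  rcases Finset.mem_union.mp this with h | h
  · have hd' := support_monomial_subset h
    simp only [Finset.mem_singleton] at hd'
    subst hd'
    simp only [Finsupp.add_apply]
    rw [Finset.sum_add_distrib, sum_single_col, sum_single_col]
    fin_cases j <;> simp
  · have hd' := support_monomial_subset h
    simp only [Finset.mem_singleton] at hd'
    subst hd'
    simp only [Finsupp.add_apply]
    rw [Finset.sum_add_distrib, sum_single_col, sum_single_col]
    fin_cases j <;> simp

lemma InQm_v (m a : ℕ) (ha : a ≤ m) : InQm n m (alpha n hn ^ (m - a) * gamma n hn ^ a) := by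
  have h1 := InQm_pow n (InQm_alpha n hn) (m - a)
  have h2 := InQm_pow n (InQm_gamma n hn) a
  have := InQm_mul n h1 h2
  rw [mul_one, mul_one] at this
  rw [show (m - a) + a = m from Nat.sub_add_cancel ha] at this
  exact this

lemma permAct_X (σ : Equiv.Perm (Fin 2)) (p : Fin n × Fin 2) :
    permAct n σ (X p) = X (p.1, σ p.2) := aeval_X _ _

lemma sign_alpha : permAct n (Equiv.swap 0 1) (alpha n hn) = alpha n hn := by
  rw [alpha_eq, map_mul, permAct_X, permAct_X]
  simp only [Equiv.swap_apply_left, Equiv.swap_apply_right]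
  ring

lemma sign_gamma : permAct n (Equiv.swap 0 1) (gamma n hn) = -(gamma n hn) := by
  rw [gamma_eq, map_sub, map_mul, map_mul, permAct_X, permAct_X, permAct_X, permAct_X]
  simp only [Equiv.swap_apply_left, Equiv.swap_apply_right]
  ring

lemma sign_v (m a : ℕ) :
    permAct n (Equiv.swap 0 1) (alpha n hn ^ (m - a) * gamma n hn ^ a)
      = (-1) ^ a * (alpha n hn ^ (m - a) * gamma n hn ^ a) := by
  rw [map_mul, map_pow, map_pow, sign_alpha, sign_gamma]
  rw [neg_pow]
  ring

lemma matAct_X_r0 (g : Matrix (Fin n) (Fin n) ℂ) (hg : IsUpperUni n g) (j : Fin 2) :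
    matAct n g (X ((r0 n hn, j) : Fin n × Fin 2)) = X (r0 n hn, j) := by
  rw [matAct, aeval_X]
  rw [Finset.sum_eq_single (r0 n hn)]
  · rw [hg.1, map_one, one_mul]
  · intro s _ hs
    rw [hg.2 s (r0 n hn) (by
      rw [Fin.lt_iff_val_lt_val]
      have : s.val ≠ (r0 n hn).val := fun h => hs (Fin.ext h)
      have h0 : (r0 n hn).val = 0 := rfl
      omega), map_zero, zero_mul]
  · simp

lemma matAct_X_r1 (g : Matrix (Fin n) (Fin n) ℂ) (hg : IsUpperUni n g) (j : Fin 2) :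
    matAct n g (X ((r1 n hn, j) : Fin n × Fin 2))
      = C (g (r0 n hn) (r1 n hn)) * X (r0 n hn, j) + X (r1 n hn, j) := by
  rw [matAct, aeval_X]
  rw [sum_two _ (r0 n hn) (r1 n hn) (r0_ne_r1 n hn) (fun s hs0 hs1 => by
    rw [hg.2 s (r1 n hn) (by
      rw [Fin.lt_iff_val_lt_val]
      have h1 : s.val ≠ (r0 n hn).val := fun h => hs0 (Fin.ext h)
      have h2 : s.val ≠ (r1 n hn).val := fun h => hs1 (Fin.ext h)
      have e0 : (r0 n hn).val = 0 := rfl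
      have e1 : (r1 n hn).val = 1 := rfl
      omega), map_zero, zero_mul])]
  rw [hg.1 (r1 n hn), map_one, one_mul]

lemma UInv_alpha : UInv n (alpha n hn) := by
  intro g hg
  rw [alpha_eq, map_mul, matAct_X_r0 n hn g hg, matAct_X_r0 n hn g hg]

lemma UInv_gamma : UInv n (gamma n hn) := by
  intro g hg
  rw [gamma_eq, map_sub, map_mul, map_mul, matAct_X_r0 n hn g hg, matAct_X_r0 n hn g hg,
    matAct_X_r1 n hn g hg, matAct_X_r1 n hn g hg]
  ring

lemma UInv_v (m a : ℕ) : UInv n (alpha n hn ^ (m - a) * gamma n hn ^ a) := by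
  intro g hg
  rw [map_mul, map_pow, map_pow, UInv_alpha n hn g hg, UInv_gamma n hn g hg]

lemma coeffs_zero (m : ℕ) (e : ℕ → ℂ)
    (h : (∑ r ∈ Finset.range (m + 1), C (e r) * (alpha n hn ^ (m - r) * gamma n hn ^ r)) = 0) :
    ∀ r ∈ Finset.range (m + 1), e r = 0 := by
  intro r hr
  have h2 := congrArg (fun q => coeff (wt m r) (psi n hn q)) h
  simp only [map_zero, map_sum, coeff_zero] at h2
  have h3 : ∀ r' ∈ Finset.range (m + 1),
      psi n hn (C (e r') * (alpha n hn ^ (m - r') * gamma n hn ^ r'))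
        = monomial (wt m r') (e r') := by
    intro r' hr'
    rw [map_mul, psi_v n hn m r' (by have := Finset.mem_range.mp hr'; omega)]
    have : psi n hn (C (e r')) = C (e r') := by
      simp [psi]
    rw [this, C_mul_monomial, mul_one]
  rw [Finset.sum_congr rfl h3, coeff_sum, Finset.sum_eq_single r] at h2
  · rwa [coeff_monomial, if_pos rfl] at h2
  · intro r' _ hr'
    rw [coeff_monomial, if_neg (fun hh => hr' (wt_injective m hh))]
  · intro hh; exact absurd hr hh

lemma matAct_diag_X (t : Fin n → ℂ) (p : Fin n × Fin 2) :
    matAct n (Matrix.diagonal t) (X p) = C (t p.1) * X p := by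
  rw [matAct, aeval_X, Finset.sum_eq_single p.1]
  · rw [Matrix.diagonal_apply_eq]
  · intro s _ hs
    rw [Matrix.diagonal_apply_ne _ hs, map_zero, zero_mul]
  · simp

lemma weight (m a : ℕ) (ham : a ≤ m) (t : Fin n → ℂ) :
    matAct n (Matrix.diagonal t) (alpha n hn ^ (m - a) * gamma n hn ^ a)
      = (t (r0 n hn) ^ (2 * m - a) * t (r1 n hn) ^ a) •
          (alpha n hn ^ (m - a) * gamma n hn ^ a) := by
  have hα : matAct n (Matrix.diagonal t) (alpha n hn)
      = (C (t (r0 n hn)) * C (t (r0 n hn))) * alpha n hn := by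
    rw [alpha_eq, map_mul, matAct_diag_X, matAct_diag_X]
    ring
  have hγ : matAct n (Matrix.diagonal t) (gamma n hn)
      = (C (t (r0 n hn)) * C (t (r1 n hn))) * gamma n hn := by
    rw [gamma_eq, map_sub, map_mul, map_mul, matAct_diag_X, matAct_diag_X, matAct_diag_X,
      matAct_diag_X]
    ring
  rw [map_mul, map_pow, map_pow, hα, hγ, smul_eq_C_mul,
    show 2 * m - a = 2 * (m - a) + a from by omega]
  simp only [map_mul, map_pow]
  ring

def W (m : ℕ) : Submodule ℂ (P n) where
  carrier := {f : P n | InQm n m f ∧ permAct n (Equiv.swap 0 1) f = -f ∧ UInv n f}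
  add_mem' := by
    rintro f g ⟨hf1, hf2, hf3⟩ ⟨hg1, hg2, hg3⟩
    refine ⟨?_, ?_, ?_⟩
    · intro d hd j
      classical
      rcases Finset.mem_union.mp (MvPolynomial.support_add hd) with h | h
      · exact hf1 d h j
      · exact hg1 d h j
    · rw [map_add, hf2, hg2, neg_add]
    · intro gg hgg
      rw [map_add, hf3 gg hgg, hg3 gg hgg]
  zero_mem' := by
    refine ⟨fun d hd j => by simp at hd, by rw [map_zero, neg_zero], fun g hg => map_zero _⟩
  smul_mem' := by
    rintro c f ⟨hf1, hf2, hf3⟩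
    refine ⟨?_, ?_, ?_⟩
    · intro d hd j
      exact hf1 d (MvPolynomial.support_smul hd) j
    · rw [map_smul, hf2, smul_neg]
    · intro gg hgg
      rw [map_smul, hf3 gg hgg]

lemma permAct_C (σ : Equiv.Perm (Fin 2)) (c : ℂ) : permAct n σ (C c) = C c := by
  simp [permAct]

lemma set_eq_span (m : ℕ) (hm : 1 ≤ m) :
    ((Submodule.span ℂ
        (Set.range fun a : {a : ℕ // 1 ≤ a ∧ a ≤ m ∧ Odd a} =>
          alpha n hn ^ (m - (a : ℕ)) * gamma n hn ^ (a : ℕ)) : Submodule ℂ (P n)) : Set (P n)) =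
      {f : P n | InQm n m f ∧ permAct n (Equiv.swap 0 1) f = -f ∧ UInv n f} := by
  apply Set.Subset.antisymm
  · have hle : Submodule.span ℂ
        (Set.range fun a : {a : ℕ // 1 ≤ a ∧ a ≤ m ∧ Odd a} =>
          alpha n hn ^ (m - (a : ℕ)) * gamma n hn ^ (a : ℕ)) ≤ W n m := by
      rw [Submodule.span_le]
      rintro _ ⟨a, rfl⟩
      refine ⟨InQm_v n hn m a a.2.2.1, ?_, UInv_v n hn m a⟩
      rw [sign_v n hn m a, a.2.2.2.neg_one_pow, neg_one_mul]
    intro f hf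
    exact hle hf
  · rintro f ⟨h1, h2, h3⟩
    have hstruct := struct n hn m f h1 h3
    set c : ℕ → ℂ := fun r => coeff (wt m r) (psi n hn f) with hc
    have hA : permAct n (Equiv.swap 0 1) f
        = ∑ r ∈ Finset.range (m + 1),
            C ((-1) ^ r * c r) * (alpha n hn ^ (m - r) * gamma n hn ^ r) := by
      conv_lhs => rw [hstruct]
      rw [map_sum]
      apply Finset.sum_congr rfl
      intro r _
      rw [map_mul, sign_v n hn m r, permAct_C, C_mul]
      simp only [map_pow, map_neg, map_one]
      ring
    have h4 : (∑ r ∈ Finset.range (m + 1),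
        C ((-1) ^ r * c r + c r) * (alpha n hn ^ (m - r) * gamma n hn ^ r)) = 0 := by
      have hB := h2
      rw [hA] at hB
      calc (∑ r ∈ Finset.range (m + 1),
            C ((-1) ^ r * c r + c r) * (alpha n hn ^ (m - r) * gamma n hn ^ r))
          = (∑ r ∈ Finset.range (m + 1),
              C ((-1) ^ r * c r) * (alpha n hn ^ (m - r) * gamma n hn ^ r))
            + ∑ r ∈ Finset.range (m + 1),
                C (c r) * (alpha n hn ^ (m - r) * gamma n hn ^ r) := by
            rw [← Finset.sum_add_distrib]
            apply Finset.sum_congr rfl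
            intro r _
            rw [C_add]
            ring
        _ = -f + f := by rw [hB, ← hstruct]
        _ = 0 := by ring
    have hcoef := coeffs_zero n hn m _ h4
    have heven : ∀ r ∈ Finset.range (m + 1), Even r → c r = 0 := by
      intro r hr hre
      have h5 := hcoef r hr
      rw [hre.neg_one_pow, one_mul] at h5
      have : (2 : ℂ) * c r = 0 := by linear_combination h5
      have h2ne : (2 : ℂ) ≠ 0 := two_ne_zero
      exact (mul_eq_zero.mp this).resolve_left h2ne
    rw [SetLike.mem_coe, hstruct]
    apply Submodule.sum_mem
    intro r hr
    by_cases hre : Even r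
    · have h0 : coeff (wt m r) (psi n hn f) = 0 := heven r hr hre
      rw [h0]
      simp
    · have hodd : Odd r := Nat.not_even_iff_odd.mp hre
      rw [← smul_eq_C_mul]
      exact Submodule.smul_mem _ _ (Submodule.subset_span
        ⟨⟨r, hodd.pos, by have := Finset.mem_range.mp hr; omega, hodd⟩, rfl⟩)

end Aux


/-- `{α^{m−a} γ^a : 1 ≤ a ≤ m, a odd}` is a ℂ-basis of `(Q_m^{sgn})^{U_n}`, and each
`α^{m−a} γ^a` is a weight vector of weight `(2m−a, a)` for the diagonal torus. -/
theorem stmt_4 (n : ℕ) (hn : 2 ≤ n) (m : ℕ) (hm : 1 ≤ m) :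
    LinearIndependent ℂ
      (fun a : {a : ℕ // 1 ≤ a ∧ a ≤ m ∧ Odd a} =>
        alpha n hn ^ (m - (a : ℕ)) * gamma n hn ^ (a : ℕ)) ∧
    ((Submodule.span ℂ
        (Set.range fun a : {a : ℕ // 1 ≤ a ∧ a ≤ m ∧ Odd a} =>
          alpha n hn ^ (m - (a : ℕ)) * gamma n hn ^ (a : ℕ)) : Set (P n)) =
      {f : P n | InQm n m f ∧ permAct n (Equiv.swap 0 1) f = -f ∧ UInv n f}) ∧
    ∀ a : ℕ, 1 ≤ a → a ≤ m → Odd a → ∀ t : Fin n → ℂ,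
      matAct n (Matrix.diagonal t) (alpha n hn ^ (m - a) * gamma n hn ^ a) =
        (t (Fin.castLE hn 0) ^ (2 * m - a) * t (Fin.castLE hn 1) ^ a) •
          (alpha n hn ^ (m - a) * gamma n hn ^ a) := by
  refine ⟨Aux.lin_indep n hn m, Aux.set_eq_span n hn m hm, ?_⟩
  intro a _ ham _ t
  exact Aux.weight n hn m a ham t
end
end

section
/- Let λ = (λ₁, λ₂, λ₃) with λ₁ ≥ λ₂ ≥ λ₃ ≥ 0 integers and λ₁ + λ₂ + λ₃ = 3m for a positive integer m. Then the number of semistandard Young tableaux of shape λ with content (m, m, m) (i.e., exactly m entries equal to each of 1, 2, 3) is K_{λ,(m,m,m)} = min{λ₁ − λ₂, λ₂ − λ₃} + 1. -/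
set_option maxHeartbeats 1000000

/-- A filling `T : Fin 3 → ℕ → ℕ` (row, 0-indexed column ↦ entry) is a semistandard Young
tableau of shape `λ = (λ 0, λ 1, λ 2)` and content `(m, m, m)` if: the entries in each row of
the diagram weakly increase from left to right, the entries strictly increase down each
column, all entries in the diagram are positive integers, the filling is `0` outside the
diagram (a normalization), and for each `v ∈ {1, 2, 3}` exactly `m` entries equal `v`. -/
def IsSSYT3 (lam : Fin 3 → ℕ) (m : ℕ) (T : Fin 3 → ℕ → ℕ) : Prop :=
  (∀ r : Fin 3, ∀ c : ℕ, c + 1 < lam r → T r c ≤ T r (c + 1)) ∧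
  (∀ r r' : Fin 3, r < r' → ∀ c : ℕ, c < lam r' → T r c < T r' c) ∧
  (∀ r : Fin 3, ∀ c : ℕ, c < lam r → 1 ≤ T r c) ∧
  (∀ r : Fin 3, ∀ c : ℕ, lam r ≤ c → T r c = 0) ∧
  (∀ v : ℕ, 1 ≤ v → v ≤ 3 →
    (∑ r : Fin 3, ((Finset.range (lam r)).filter fun c => T r c = v).card) = m)

open Finset

def Tab (lam : Fin 3 → ℕ) (m d : ℕ) : Fin 3 → ℕ → ℕ := fun r c =>
  if r = 0 then (if c < m then 1 else if c < 2 * m - d then 2 else if c < lam 0 then 3 else 0)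
  else if r = 1 then (if c < d then 2 else if c < lam 1 then 3 else 0)
  else (if c < lam 2 then 3 else 0)

lemma dc_eq_range (s : Finset ℕ) (h : ∀ a ∈ s, ∀ b, b ≤ a → b ∈ s) :
    s = Finset.range s.card := by
  have hsub : s ⊆ Finset.range s.card := by
    intro a ha
    rw [Finset.mem_range]
    by_contra hlt
    push_neg at hlt
    have hss : Finset.range (a + 1) ⊆ s := by
      intro b hb
      exact h a ha b (Nat.lt_succ_iff.mp (Finset.mem_range.mp hb))
    have := Finset.card_le_card hss
    simp at this; omega
  exact Finset.eq_of_subset_of_card_le hsub (by simp)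

lemma ssyt_eq_tab (lam : Fin 3 → ℕ) (m : ℕ) (h12 : lam 1 ≤ lam 0) (h23 : lam 2 ≤ lam 1)
    (hsum : lam 0 + lam 1 + lam 2 = 3 * m) (T : Fin 3 → ℕ → ℕ) (hT : IsSSYT3 lam m T) :
    ∃ d, lam 2 ≤ d ∧ 2 * m ≤ lam 0 + d ∧ d ≤ lam 1 ∧ d + lam 1 ≤ 2 * m ∧ T = Tab lam m d := by
  obtain ⟨hrow, hcol, hpos, hzero, hcount⟩ := hT
  -- rows are monotone
  have hmono : ∀ r : Fin 3, ∀ c c' : ℕ, c ≤ c' → c' < lam r → T r c ≤ T r c' := by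
    intro r c c' hcc
    induction c', hcc using Nat.le_induction with
    | base => intro _; exact le_refl _
    | succ n hn ih => intro h; exact le_trans (ih (by omega)) (hrow r n (by omega))
  -- counting hypotheses
  have hc1 := hcount 1 (by norm_num) (by norm_num)
  have hc2 := hcount 2 (by norm_num) (by norm_num)
  have hc3 := hcount 3 (by norm_num) (by norm_num)
  rw [Fin.sum_univ_three] at hc1 hc2 hc3
  -- all entries in the diagram are at most 3
  have hsplit : ∀ r : Fin 3, ((Finset.range (lam r)).filter fun c => T r c ≤ 3).card =
      ((Finset.range (lam r)).filter fun c => T r c = 1).card +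
      ((Finset.range (lam r)).filter fun c => T r c = 2).card +
      ((Finset.range (lam r)).filter fun c => T r c = 3).card := by
    intro r
    have hco : ∀ c ∈ Finset.range (lam r), (T r c ≤ 3 ↔ (T r c = 1 ∨ T r c = 2) ∨ T r c = 3) := by
      intro c hc; have := hpos r c (Finset.mem_range.mp hc); omega
    rw [filter_congr hco, filter_or, filter_or]
    rw [card_union_of_disjoint, card_union_of_disjoint]
    · rw [Finset.disjoint_left]; intro x hx hx'; simp only [mem_filter] at hx hx'; omega
    · rw [Finset.disjoint_left]; intro x hx hx'
      simp only [mem_filter, mem_union] at hx hx'; omega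
  have hle0 : ((Finset.range (lam 0)).filter fun c => T 0 c ≤ 3).card ≤ lam 0 :=
    le_trans (Finset.card_le_card (filter_subset _ _)) (le_of_eq (Finset.card_range _))
  have hle1 : ((Finset.range (lam 1)).filter fun c => T 1 c ≤ 3).card ≤ lam 1 :=
    le_trans (Finset.card_le_card (filter_subset _ _)) (le_of_eq (Finset.card_range _))
  have hle2 : ((Finset.range (lam 2)).filter fun c => T 2 c ≤ 3).card ≤ lam 2 :=
    le_trans (Finset.card_le_card (filter_subset _ _)) (le_of_eq (Finset.card_range _))
  have hs0 := hsplit 0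
  have hs1 := hsplit 1
  have hs2 := hsplit 2
  have hcard0 : ((Finset.range (lam 0)).filter fun c => T 0 c ≤ 3).card = lam 0 := by omega
  have hcard1 : ((Finset.range (lam 1)).filter fun c => T 1 c ≤ 3).card = lam 1 := by omega
  have hcard2 : ((Finset.range (lam 2)).filter fun c => T 2 c ≤ 3).card = lam 2 := by omega
  have hle30 : ∀ c, c < lam 0 → T 0 c ≤ 3 := by
    intro c hc
    have heq : ((Finset.range (lam 0)).filter fun c => T 0 c ≤ 3) = Finset.range (lam 0) :=
      Finset.eq_of_subset_of_card_le (filter_subset _ _) (by rw [hcard0]; simp)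
    have : c ∈ (Finset.range (lam 0)).filter fun c => T 0 c ≤ 3 := by
      rw [heq]; exact Finset.mem_range.mpr hc
    exact (Finset.mem_filter.mp this).2
  have hle31 : ∀ c, c < lam 1 → T 1 c ≤ 3 := by
    intro c hc
    have heq : ((Finset.range (lam 1)).filter fun c => T 1 c ≤ 3) = Finset.range (lam 1) :=
      Finset.eq_of_subset_of_card_le (filter_subset _ _) (by rw [hcard1]; simp)
    have : c ∈ (Finset.range (lam 1)).filter fun c => T 1 c ≤ 3 := by
      rw [heq]; exact Finset.mem_range.mpr hc
    exact (Finset.mem_filter.mp this).2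
  have hle32 : ∀ c, c < lam 2 → T 2 c ≤ 3 := by
    intro c hc
    have heq : ((Finset.range (lam 2)).filter fun c => T 2 c ≤ 3) = Finset.range (lam 2) :=
      Finset.eq_of_subset_of_card_le (filter_subset _ _) (by rw [hcard2]; simp)
    have : c ∈ (Finset.range (lam 2)).filter fun c => T 2 c ≤ 3 := by
      rw [heq]; exact Finset.mem_range.mpr hc
    exact (Finset.mem_filter.mp this).2
  -- lower bounds for rows 1 and 2
  have hr1lb : ∀ c, c < lam 1 → 2 ≤ T 1 c := by
    intro c hc
    have := hcol 0 1 (by decide) c hc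
    have := hpos 0 c (by omega)
    omega
  have hr2lb : ∀ c, c < lam 2 → 3 ≤ T 2 c := by
    intro c hc
    have := hcol 1 2 (by decide) c hc
    have := hr1lb c (by omega)
    omega
  have hr2 : ∀ c, c < lam 2 → T 2 c = 3 := fun c hc => le_antisymm (hle32 c hc) (hr2lb c hc)
  -- row 1 structure: d = number of 2's
  obtain ⟨d, hdval⟩ : ∃ d, ((Finset.range (lam 1)).filter fun c => T 1 c = 2).card = d :=
    ⟨_, rfl⟩
  have hs1dc : ((Finset.range (lam 1)).filter fun c => T 1 c = 2) = Finset.range d := by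
    rw [← hdval]
    apply dc_eq_range
    intro a ha b hba
    simp only [mem_filter, mem_range] at ha ⊢
    have := hmono 1 b a hba ha.1
    have := hr1lb b (by omega)
    exact ⟨by omega, by omega⟩
  have hrow1 : ∀ c, c < lam 1 → (T 1 c = 2 ↔ c < d) := by
    intro c hc
    constructor
    · intro h
      have : c ∈ (Finset.range (lam 1)).filter fun c => T 1 c = 2 := by
        simp only [mem_filter, mem_range]; exact ⟨hc, h⟩
      rwa [hs1dc, Finset.mem_range] at this
    · intro h
      have : c ∈ (Finset.range (lam 1)).filter fun c => T 1 c = 2 := by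
        rw [hs1dc]; exact Finset.mem_range.mpr h
      exact (Finset.mem_filter.mp this).2
  have hdle : d ≤ lam 1 := by
    rw [← hdval]
    exact le_trans (Finset.card_le_card (filter_subset _ _)) (le_of_eq (Finset.card_range _))
  -- row 0 structure
  obtain ⟨a1, ha1⟩ : ∃ a1, ((Finset.range (lam 0)).filter fun c => T 0 c ≤ 1).card = a1 :=
    ⟨_, rfl⟩
  obtain ⟨a2, ha2⟩ : ∃ a2, ((Finset.range (lam 0)).filter fun c => T 0 c ≤ 2).card = a2 :=
    ⟨_, rfl⟩
  have ht1dc : ((Finset.range (lam 0)).filter fun c => T 0 c ≤ 1) = Finset.range a1 := by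
    rw [← ha1]
    apply dc_eq_range
    intro a ha b hba
    simp only [mem_filter, mem_range] at ha ⊢
    have := hmono 0 b a hba ha.1
    exact ⟨by omega, by omega⟩
  have ht2dc : ((Finset.range (lam 0)).filter fun c => T 0 c ≤ 2) = Finset.range a2 := by
    rw [← ha2]
    apply dc_eq_range
    intro a ha b hba
    simp only [mem_filter, mem_range] at ha ⊢
    have := hmono 0 b a hba ha.1
    exact ⟨by omega, by omega⟩
  have ht1' : ((Finset.range (lam 0)).filter fun c => T 0 c ≤ 1).card
      = ((Finset.range (lam 0)).filter fun c => T 0 c = 1).card := by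
    congr 1
    apply filter_congr
    intro c hc
    have := hpos 0 c (Finset.mem_range.mp hc)
    constructor <;> intro <;> omega
  have ht2card : ((Finset.range (lam 0)).filter fun c => T 0 c ≤ 2).card =
      ((Finset.range (lam 0)).filter fun c => T 0 c = 1).card +
      ((Finset.range (lam 0)).filter fun c => T 0 c = 2).card := by
    have hco : ∀ c ∈ Finset.range (lam 0), (T 0 c ≤ 2 ↔ T 0 c = 1 ∨ T 0 c = 2) := by
      intro c hc; have := hpos 0 c (Finset.mem_range.mp hc); omega
    rw [filter_congr hco, filter_or, card_union_of_disjoint]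
    rw [Finset.disjoint_left]; intro x hx hx'; simp only [mem_filter] at hx hx'; omega
  have hf11 : ((Finset.range (lam 1)).filter fun c => T 1 c = 1).card = 0 := by
    rw [Finset.card_eq_zero, Finset.filter_eq_empty_iff]
    intro c hc; have := hr1lb c (Finset.mem_range.mp hc); omega
  have hf21 : ((Finset.range (lam 2)).filter fun c => T 2 c = 1).card = 0 := by
    rw [Finset.card_eq_zero, Finset.filter_eq_empty_iff]
    intro c hc; have := hr2lb c (Finset.mem_range.mp hc); omega
  have hf22 : ((Finset.range (lam 2)).filter fun c => T 2 c = 2).card = 0 := by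
    rw [Finset.card_eq_zero, Finset.filter_eq_empty_iff]
    intro c hc; have := hr2lb c (Finset.mem_range.mp hc); omega
  have ha1m : a1 = m := by omega
  have ha2m : a2 + d = 2 * m := by omega
  -- characterizations as inequalities on c
  have hT0a : ∀ c, c < lam 0 → (T 0 c ≤ 1 ↔ c < m) := by
    intro c hc
    constructor
    · intro h
      have : c ∈ (Finset.range (lam 0)).filter fun c => T 0 c ≤ 1 := by
        simp only [mem_filter, mem_range]; exact ⟨hc, h⟩
      rw [ht1dc, Finset.mem_range] at this; omega
    · intro h
      have : c ∈ (Finset.range (lam 0)).filter fun c => T 0 c ≤ 1 := by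
        rw [ht1dc]; apply Finset.mem_range.mpr; omega
      exact (Finset.mem_filter.mp this).2
  have hT0b : ∀ c, c < lam 0 → (T 0 c ≤ 2 ↔ c < 2 * m - d) := by
    intro c hc
    constructor
    · intro h
      have : c ∈ (Finset.range (lam 0)).filter fun c => T 0 c ≤ 2 := by
        simp only [mem_filter, mem_range]; exact ⟨hc, h⟩
      rw [ht2dc, Finset.mem_range] at this; omega
    · intro h
      have : c ∈ (Finset.range (lam 0)).filter fun c => T 0 c ≤ 2 := by
        rw [ht2dc]; apply Finset.mem_range.mpr; omega
      exact (Finset.mem_filter.mp this).2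
  -- inequalities on d
  have hd2 : 2 * m ≤ lam 0 + d := by
    have h : ((Finset.range (lam 0)).filter fun c => T 0 c ≤ 2).card ≤ lam 0 :=
      le_trans (Finset.card_le_card (filter_subset _ _)) (le_of_eq (Finset.card_range _))
    omega
  clear hc1 hc2 hc3 hsplit hs0 hs1 hs2 hcard0 hcard1 hcard2 hle0 hle1 hle2
  clear ht1dc ht2dc ht1' ht2card hf11 hf21 hf22 hs1dc hdval ha1 ha2 ha1m ha2m
  clear hmono hrow hcount hr2lb
  have hd1 : lam 2 ≤ d := by
    rcases Nat.eq_zero_or_pos (lam 2) with h | h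
    · omega
    · have hc := hr2 (lam 2 - 1) (by omega)
      have h1 := hcol 1 2 (by decide) (lam 2 - 1) (by omega)
      have h2' := hr1lb (lam 2 - 1) (by omega)
      have h3 := hrow1 (lam 2 - 1) (by omega)
      omega
  have hd4 : d ≤ m := by
    rcases Nat.eq_zero_or_pos d with h | h
    · omega
    · have h2 : T 1 (d - 1) = 2 := (hrow1 (d - 1) (by omega)).mpr (by omega)
      have h1 := hcol 0 1 (by decide) (d - 1) (by omega)
      have h3 := hT0a (d - 1) (by omega)
      omega
  have hd5 : d + lam 1 ≤ 2 * m := by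
    rcases Nat.lt_or_ge d (lam 1) with h | h
    · have h3 := hrow1 (lam 1 - 1) (by omega)
      have hub := hle31 (lam 1 - 1) (by omega)
      have hlb := hr1lb (lam 1 - 1) (by omega)
      have h1 := hcol 0 1 (by decide) (lam 1 - 1) (by omega)
      have h4 := hT0b (lam 1 - 1) (by omega)
      omega
    · omega
  refine ⟨d, hd1, hd2, hdle, hd5, ?_⟩
  funext r c
  fin_cases r
  · show T 0 c = Tab lam m d 0 c
    simp only [Tab]
    norm_num
    have h0 := hzero 0 c
    rcases Nat.lt_or_ge c (lam 0) with hc | hc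
    · have ha := hT0a c hc
      have hb := hT0b c hc
      have := hle30 c hc
      have := hpos 0 c hc
      split_ifs <;> omega
    · split_ifs <;> omega
  · show T 1 c = Tab lam m d 1 c
    simp only [Tab]
    norm_num
    have h0 := hzero 1 c
    rcases Nat.lt_or_ge c (lam 1) with hc | hc
    · have ha := hrow1 c hc
      have := hle31 c hc
      have := hr1lb c hc
      split_ifs <;> omega
    · split_ifs <;> omega
  · show T 2 c = Tab lam m d 2 c
    simp only [Tab]
    norm_num
    have h0 := hzero 2 c
    rcases Nat.lt_or_ge c (lam 2) with hc | hc
    · have := hr2 c hc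
      split_ifs <;> omega
    · split_ifs <;> omega

lemma tab_d (lam : Fin 3 → ℕ) (m d : ℕ) (h3 : d ≤ lam 1) :
    ((Finset.range (lam 1)).filter fun c => Tab lam m d 1 c = 2).card = d := by
  have h : ((Finset.range (lam 1)).filter fun c => Tab lam m d 1 c = 2) = Finset.range d := by
    ext c
    simp only [Finset.mem_filter, Finset.mem_range, Tab]
    norm_num
    split_ifs <;> omega
  rw [h, Finset.card_range]

lemma tab_mem (lam : Fin 3 → ℕ) (m d : ℕ) (h12 : lam 1 ≤ lam 0) (h23 : lam 2 ≤ lam 1)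
    (hsum : lam 0 + lam 1 + lam 2 = 3 * m)
    (h1 : lam 2 ≤ d) (h2 : 2 * m ≤ lam 0 + d) (h3 : d ≤ lam 1) (h5 : d + lam 1 ≤ 2 * m) :
    IsSSYT3 lam m (Tab lam m d) := by
  have h4 : d ≤ m := by omega
  refine ⟨?_, ?_, ?_, ?_, ?_⟩
  · intro r c hc
    fin_cases r <;> simp only [Tab, Fin.isValue] <;> simp_all <;> split_ifs <;> omega
  · intro r r' hrr c hc
    fin_cases r <;> fin_cases r' <;> simp_all [Tab] <;> split_ifs <;> omega
  · intro r c hc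
    fin_cases r <;> simp_all [Tab] <;> split_ifs <;> omega
  · intro r c hc
    fin_cases r <;> simp_all [Tab] <;> split_ifs <;> omega
  · intro v hv1 hv3
    interval_cases v
    · rw [Fin.sum_univ_three]
      have e0 : ((Finset.range (lam 0)).filter fun c => Tab lam m d 0 c = 1) = Finset.range m := by
        ext c; simp only [mem_filter, mem_range, Tab]
        norm_num; split_ifs <;> omega
      have e1 : ((Finset.range (lam 1)).filter fun c => Tab lam m d 1 c = 1) = ∅ := by
        ext c; simp only [mem_filter, mem_range, Tab]
        norm_num; split_ifs <;> omega
      have e2 : ((Finset.range (lam 2)).filter fun c => Tab lam m d 2 c = 1) = ∅ := by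
        ext c; simp only [mem_filter, mem_range, Tab]
        norm_num [Fin.ext_iff]; split_ifs <;> omega
      rw [e0, e1, e2]; simp
    · rw [Fin.sum_univ_three]
      have e0 : ((Finset.range (lam 0)).filter fun c => Tab lam m d 0 c = 2) = Finset.Ico m (2*m-d) := by
        ext c; simp only [mem_filter, mem_range, mem_Ico, Tab]
        norm_num; split_ifs <;> omega
      have e1 : ((Finset.range (lam 1)).filter fun c => Tab lam m d 1 c = 2) = Finset.range d := by
        ext c; simp only [mem_filter, mem_range, Tab]
        norm_num; split_ifs <;> omega
      have e2 : ((Finset.range (lam 2)).filter fun c => Tab lam m d 2 c = 2) = ∅ := by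
        ext c; simp only [mem_filter, mem_range, Tab]
        norm_num [Fin.ext_iff]; split_ifs <;> omega
      rw [e0, e1, e2]; simp [Nat.card_Ico]; omega
    · rw [Fin.sum_univ_three]
      have e0 : ((Finset.range (lam 0)).filter fun c => Tab lam m d 0 c = 3) = Finset.Ico (2*m-d) (lam 0) := by
        ext c; simp only [mem_filter, mem_range, mem_Ico, Tab]
        norm_num; split_ifs <;> omega
      have e1 : ((Finset.range (lam 1)).filter fun c => Tab lam m d 1 c = 3) = Finset.Ico d (lam 1) := by
        ext c; simp only [mem_filter, mem_range, mem_Ico, Tab]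
        norm_num; split_ifs <;> omega
      have e2 : ((Finset.range (lam 2)).filter fun c => Tab lam m d 2 c = 3) = Finset.range (lam 2) := by
        ext c; simp only [mem_filter, mem_range, Tab]
        norm_num [Fin.ext_iff]
      rw [e0, e1, e2]; simp [Nat.card_Ico]; omega


/-- The Kostka number `K_{λ,(m,m,m)}` equals `min{λ₁ − λ₂, λ₂ − λ₃} + 1` for any Young
diagram `λ = (λ₁, λ₂, λ₃)` with `|λ| = 3m`, `m ≥ 1`. -/
theorem stmt_7 (m : ℕ) (hm : 1 ≤ m) (lam : Fin 3 → ℕ)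
    (h12 : lam 1 ≤ lam 0) (h23 : lam 2 ≤ lam 1)
    (hsum : lam 0 + lam 1 + lam 2 = 3 * m) :
    Nat.card {T : Fin 3 → ℕ → ℕ | IsSSYT3 lam m T} =
      min (lam 0 - lam 1) (lam 1 - lam 2) + 1 := by
  have main : Nat.card {T : Fin 3 → ℕ → ℕ | IsSSYT3 lam m T}
      = (Finset.Icc (max (lam 2) (2 * m - lam 0)) (min (lam 1) (2 * m - lam 1))).card := by
    rw [← Nat.card_eq_finsetCard]
    apply Nat.card_congr
    refine ⟨fun T => ⟨((Finset.range (lam 1)).filter fun c => T.1 1 c = 2).card, ?_⟩,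
            fun d => ⟨Tab lam m d.1, ?_⟩, ?_, ?_⟩
    · obtain ⟨d, hd1, hd2, hd3, hd5, hTeq⟩ := ssyt_eq_tab lam m h12 h23 hsum T.1 T.2
      rw [hTeq, tab_d lam m d hd3]
      rw [Finset.mem_Icc]
      omega
    · have hd := Finset.mem_Icc.mp d.2
      show Tab lam m d.1 ∈ {T | IsSSYT3 lam m T}
      refine tab_mem lam m d.1 h12 h23 hsum ?_ ?_ ?_ ?_ <;> omega
    · intro T
      apply Subtype.ext
      obtain ⟨d, hd1, hd2, hd3, hd5, hTeq⟩ := ssyt_eq_tab lam m h12 h23 hsum T.1 T.2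
      show Tab lam m ((Finset.range (lam 1)).filter fun c => T.1 1 c = 2).card = T.1
      rw [hTeq, tab_d lam m d hd3]
    · intro d
      apply Subtype.ext
      have hd := Finset.mem_Icc.mp d.2
      show ((Finset.range (lam 1)).filter fun c => Tab lam m d.1 1 c = 2).card = d.1
      exact tab_d lam m d.1 (by omega)
  rw [main, Nat.card_Icc]
  omega
end

section
/- Let λ₁ ≥ λ₂ ≥ λ₃ ≥ 0 be integers with λ₁ + λ₂ + λ₃ divisible by 3. Then the number of tuples (a, b, c, d, e, f) with a, b, d, e ∈ ℤ_{≥0} and c, f ∈ {0,1} satisfying the system 3a + 4b + 6c + 2d + 6e + 4f = λ₁, 2b + 3c + 2d + 6e + 4f = λ₂, and 2d + f = λ₃, equals ⌊(min{λ₁ − λ₂, λ₂ − λ₃} + 2λ₁ + λ₂)/6⌋ + ⌊λ₂/2⌋ + ⌊−(λ₁ + 2λ₂)/3⌋ + 1. -/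
private def Q18 (l1 l2 l3 : ℤ) (p : ℕ × ℕ × Fin 2 × ℕ × ℕ × Fin 2) : Prop :=
  3 * (p.1 : ℤ) + 4 * (p.2.1 : ℤ) + 6 * ((p.2.2.1 : ℕ) : ℤ) + 2 * (p.2.2.2.1 : ℤ) +
      6 * (p.2.2.2.2.1 : ℤ) + 4 * ((p.2.2.2.2.2 : ℕ) : ℤ) = l1 ∧
  2 * (p.2.1 : ℤ) + 3 * ((p.2.2.1 : ℕ) : ℤ) + 2 * (p.2.2.2.1 : ℤ) +
      6 * (p.2.2.2.2.1 : ℤ) + 4 * ((p.2.2.2.2.2 : ℕ) : ℤ) = l2 ∧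
  2 * (p.2.2.2.1 : ℤ) + ((p.2.2.2.2.2 : ℕ) : ℤ) = l3

open Fin.NatCast in
private def g18 (l2 k d0 f0 bq c0 : ℤ) (x : ℤ) : ℕ × ℕ × Fin 2 × ℕ × ℕ × Fin 2 :=
  ((k - l2 + f0 + 2 * x).toNat,
   (bq - c0 - 3 * x).toNat,
   (c0.toNat : Fin 2),
   d0.toNat,
   x.toNat,
   (f0.toNat : Fin 2))

set_option maxHeartbeats 1000000 in
private theorem aux18 (l1 l2 l3 k d0 f0 bq c0 hi r lq s lo : ℤ)
    (h12 : l2 ≤ l1) (h23 : l3 ≤ l2) (h3 : 0 ≤ l3)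
    (hk : l1 + l2 + l3 = 3 * k)
    (hd : l3 = 2 * d0 + f0) (hf0 : 0 ≤ f0) (hf1 : f0 ≤ 1)
    (hbq : l2 - l3 - 3 * f0 = 2 * bq + c0) (hc0 : 0 ≤ c0) (hc1 : c0 ≤ 1)
    (hhi : l2 - l3 - 3 * f0 - 3 * c0 = 6 * hi + r) (hr0 : 0 ≤ r) (hr1 : r ≤ 5)
    (hlq : l2 - l3 - 3 * f0 - (l1 - l2) = 6 * lq - s) (hs0 : 0 ≤ s) (hs1 : s ≤ 5)
    (hlo1 : lo = 0 ∨ lo = lq) (hlo2 : 0 ≤ lo) (hlo3 : lq ≤ lo) :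
    Nat.card {p : ℕ × ℕ × Fin 2 × ℕ × ℕ × Fin 2 // Q18 l1 l2 l3 p} = (hi + 1 - lo).toNat := by
  have hmem : ∀ x : ↥(Finset.Icc lo hi), Q18 l1 l2 l3 (g18 l2 k d0 f0 bq c0 (x : ℤ)) := by
    intro x
    have hx := Finset.mem_Icc.mp x.2
    unfold Q18 g18
    simp only [Fin.val_natCast]
    refine ⟨?_, ?_, ?_⟩ <;> omega
  have hbij : Function.Bijective
      (fun x : ↥(Finset.Icc lo hi) =>
        (⟨g18 l2 k d0 f0 bq c0 (x : ℤ), hmem x⟩ :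
          {p : ℕ × ℕ × Fin 2 × ℕ × ℕ × Fin 2 // Q18 l1 l2 l3 p})) := by
    constructor
    · intro x y h
      have hx := Finset.mem_Icc.mp x.2
      have hy := Finset.mem_Icc.mp y.2
      have h' : (g18 l2 k d0 f0 bq c0 (x : ℤ)).2.2.2.2.1
          = (g18 l2 k d0 f0 bq c0 (y : ℤ)).2.2.2.2.1 := by
        rw [Subtype.mk.injEq] at h; rw [h]
      simp only [g18] at h'
      exact Subtype.ext (by omega)
    · rintro ⟨⟨a, b, c, d, e, f⟩, h⟩
      obtain ⟨h1, h2, h3⟩ := h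
      have hc := c.isLt
      have hf := f.isLt
      simp only at h1 h2 h3
      have hfc : ((f : ℕ) : ℤ) = f0 := by
        rcases (by omega : f0 = 0 ∨ f0 = 1) with h' | h' <;> omega
      have hcc : ((c : ℕ) : ℤ) = c0 := by
        rcases (by omega : c0 = 0 ∨ c0 = 1) with h' | h' <;> omega
      refine ⟨⟨(e : ℤ), Finset.mem_Icc.mpr ⟨by omega, by omega⟩⟩, ?_⟩
      apply Subtype.ext
      show g18 l2 k d0 f0 bq c0 (e : ℤ) = (a, b, c, d, e, f)
      unfold g18
      simp only [Prod.mk.injEq, Fin.ext_iff, Fin.val_natCast]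
      refine ⟨?_, ?_, ?_, ?_, ?_, ?_⟩ <;> omega
  rw [(Nat.card_eq_of_bijective _ hbij).symm, Nat.card_eq_finsetCard, Int.card_Icc]

/-- The number of tuples `(a, b, c, d, e, f)` with `a, b, d, e ∈ ℤ_{≥0}` and `c, f ∈ {0,1}`
satisfying `3a + 4b + 6c + 2d + 6e + 4f = λ₁`, `2b + 3c + 2d + 6e + 4f = λ₂`, `2d + f = λ₃`
equals `⌊(min{λ₁−λ₂, λ₂−λ₃} + 2λ₁ + λ₂)/6⌋ + ⌊λ₂/2⌋ + ⌊−(λ₁+2λ₂)/3⌋ + 1`. -/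
theorem stmt_18 (l1 l2 l3 : ℤ) (h12 : l2 ≤ l1) (h23 : l3 ≤ l2) (h3 : 0 ≤ l3)
    (hdvd : (3 : ℤ) ∣ l1 + l2 + l3) :
    (Nat.card {p : ℕ × ℕ × Fin 2 × ℕ × ℕ × Fin 2 //
        match p with
        | (a, b, c, d, e, f) =>
          3 * (a : ℤ) + 4 * (b : ℤ) + 6 * ((c : ℕ) : ℤ) + 2 * (d : ℤ) + 6 * (e : ℤ) +
              4 * ((f : ℕ) : ℤ) = l1 ∧
          2 * (b : ℤ) + 3 * ((c : ℕ) : ℤ) + 2 * (d : ℤ) + 6 * (e : ℤ) +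
              4 * ((f : ℕ) : ℤ) = l2 ∧
          2 * (d : ℤ) + ((f : ℕ) : ℤ) = l3} : ℤ) =
      ⌊((min (l1 - l2) (l2 - l3) + 2 * l1 + l2 : ℤ) : ℚ) / 6⌋ + ⌊((l2 : ℚ)) / 2⌋ +
        ⌊((-(l1 + 2 * l2) : ℤ) : ℚ) / 3⌋ + 1 := by
  obtain ⟨k, hk⟩ := hdvd
  obtain ⟨d0, f0, hd, hf0, hf1⟩ : ∃ d0 f0 : ℤ, l3 = 2 * d0 + f0 ∧ 0 ≤ f0 ∧ f0 ≤ 1 :=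
    ⟨l3 / 2, l3 % 2, by omega, by omega, by omega⟩
  obtain ⟨bq, c0, hbq, hc0, hc1⟩ : ∃ bq c0 : ℤ,
      l2 - l3 - 3 * f0 = 2 * bq + c0 ∧ 0 ≤ c0 ∧ c0 ≤ 1 :=
    ⟨(l2 - l3 - 3 * f0) / 2, (l2 - l3 - 3 * f0) % 2, by omega, by omega, by omega⟩
  obtain ⟨hi, r, hhi, hr0, hr1⟩ : ∃ hi r : ℤ,
      l2 - l3 - 3 * f0 - 3 * c0 = 6 * hi + r ∧ 0 ≤ r ∧ r ≤ 5 :=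
    ⟨(l2 - l3 - 3 * f0 - 3 * c0) / 6, (l2 - l3 - 3 * f0 - 3 * c0) % 6, by omega, by omega, by omega⟩
  obtain ⟨lq, s, hlq, hs0, hs1⟩ : ∃ lq s : ℤ,
      l2 - l3 - 3 * f0 - (l1 - l2) = 6 * lq - s ∧ 0 ≤ s ∧ s ≤ 5 :=
    ⟨(l2 - l3 - 3 * f0 - (l1 - l2) + 5) / 6, 5 - (l2 - l3 - 3 * f0 - (l1 - l2) + 5) % 6,
      by omega, by omega, by omega⟩
  obtain ⟨lo, hlo1, hlo2, hlo3⟩ : ∃ lo : ℤ, (lo = 0 ∨ lo = lq) ∧ 0 ≤ lo ∧ lq ≤ lo := by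
    rcases le_total lq 0 with h | h
    · exact ⟨0, Or.inl rfl, le_refl 0, h⟩
    · exact ⟨lq, Or.inr rfl, h, le_refl lq⟩
  have hcard : Nat.card {p : ℕ × ℕ × Fin 2 × ℕ × ℕ × Fin 2 //
        match p with
        | (a, b, c, d, e, f) =>
          3 * (a : ℤ) + 4 * (b : ℤ) + 6 * ((c : ℕ) : ℤ) + 2 * (d : ℤ) + 6 * (e : ℤ) +
              4 * ((f : ℕ) : ℤ) = l1 ∧
          2 * (b : ℤ) + 3 * ((c : ℕ) : ℤ) + 2 * (d : ℤ) + 6 * (e : ℤ) +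
              4 * ((f : ℕ) : ℤ) = l2 ∧
          2 * (d : ℤ) + ((f : ℕ) : ℤ) = l3}
      = Nat.card {p : ℕ × ℕ × Fin 2 × ℕ × ℕ × Fin 2 // Q18 l1 l2 l3 p} :=
    Nat.card_congr (Equiv.subtypeEquivRight (by rintro ⟨a, b, c, d, e, f⟩; exact Iff.rfl))
  rw [hcard,
    aux18 l1 l2 l3 k d0 f0 bq c0 hi r lq s lo h12 h23 h3 hk hd hf0 hf1 hbq hc0 hc1
      hhi hr0 hr1 hlq hs0 hs1 hlo1 hlo2 hlo3]
  have e2 : ⌊((l2 : ℚ)) / 2⌋ = l2 / 2 := by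
    rw [show ((2 : ℚ)) = ((2 : ℕ) : ℚ) by norm_num, Rat.floor_intCast_div_natCast]
    norm_num
  have e3 : ⌊((-(l1 + 2 * l2) : ℤ) : ℚ) / 3⌋ = (-(l1 + 2 * l2)) / 3 := by
    rw [show ((3 : ℚ)) = ((3 : ℕ) : ℚ) by norm_num, Rat.floor_intCast_div_natCast]
    norm_num
  rcases le_total (l1 - l2) (l2 - l3) with hm | hm
  · rw [min_eq_left hm]
    have e1 : ⌊(((l1 - l2) + 2 * l1 + l2 : ℤ) : ℚ) / 6⌋ = ((l1 - l2) + 2 * l1 + l2) / 6 := by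
      rw [show ((6 : ℚ)) = ((6 : ℕ) : ℚ) by norm_num, Rat.floor_intCast_div_natCast]
      norm_num
    rw [e1, e2, e3]
    omega
  · rw [min_eq_right hm]
    have e1 : ⌊(((l2 - l3) + 2 * l1 + l2 : ℤ) : ℚ) / 6⌋ = ((l2 - l3) + 2 * l1 + l2) / 6 := by
      rw [show ((6 : ℚ)) = ((6 : ℕ) : ℚ) by norm_num, Rat.floor_intCast_div_natCast]
      norm_num
    rw [e1, e2, e3]
    omega
end
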